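/- Let α > 1/2, β ∈ ℝ, and let w_j := max_{1 ≤ i ≤ j} i^α·(log(i+1))^β for j ≥ 1 (so that w is nondecreasing). Then there exist constants c, C > 0 such that for all sufficiently large n, c·n^{−(α−1/2)}·(log(n+1))^{−β} ≤ σ_n(U(ℓ_∞(w))) ≤ C·n^{−(α−1/2)}·(log(n+1))^{−β}, where U(ℓ_∞(w)) := {x ∈ ℓ₂ : sup_{j≥1} |w_j x_j| ≤ 1}. -/

import Mathlib

/-!
With `φ(t) = t ^ α * log (t + 1) ^ β` the weights are `w_j = max_{i ≤ j} φ(i + 1)`. Since `α > 0`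
the power beats the logarithm, so `φ` is quasi-monotone (`φ s ≤ C φ t` for `1 ≤ s ≤ t`) and
doubling, whence `w_j ≍ φ(j + 1)`. For the upper bound keep the first `n` coordinates: the error is
at most `(∑_{j ≥ n} w_j⁻²)^{1/2}`, and as `2α > 1` this tail is `O(n / φ(n)²)`. For the lower bound
take `x_j = w_j⁻¹`: an `n`-term approximant misses `n` of the first `2n` coordinates, each of size
at least `w_{2n-1}⁻¹ ≳ φ(n)⁻¹`. Both bounds are constant multiples of
`√n / φ(n) = n ^ (-(α - 1/2)) * log (n + 1) ^ (-β)`.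
-/

open scoped BigOperators

/-- The `ℓ₂` norm of a real sequence. -/
noncomputable def l2norm (x : ℕ → ℝ) : ℝ := Real.sqrt (∑' j, (x j) ^ 2)

/-- The error of best `n`-term approximation of `x` in `ℓ₂`:
the infimum of `‖x - S‖_{ℓ₂}` over all sequences `S` supported on at most `n` indices. -/
noncomputable def sigman (n : ℕ) (x : ℕ → ℝ) : ℝ :=
  sInf {e : ℝ | ∃ S : ℕ → ℝ, (Function.support S).Finite ∧
    (Function.support S).ncard ≤ n ∧ e = l2norm (fun j => x j - S j)}

/-- `xs` is the decreasing rearrangement of the absolute values of the entries of `x`: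
it is nonincreasing and is obtained by rearranging `(|x j|)` via a bijection of the indices. -/
def IsDecRearrangement (x xs : ℕ → ℝ) : Prop :=
  Antitone xs ∧ ∃ e : ℕ ≃ ℕ, ∀ j, xs j = |x (e j)|

/-- The nondecreasing weights `w_j = max_{1 ≤ i ≤ j} i^α (log (i+1))^β` (indexed from `0`,
so index `j` corresponds to the `(j+1)`-st weight). -/
noncomputable def walpha (α β : ℝ) (j : ℕ) : ℝ :=
  Finset.sup' (Finset.range (j + 1)) (Finset.nonempty_range_iff.mpr (Nat.succ_ne_zero j))
    (fun i => ((i : ℝ) + 1) ^ α * Real.log ((i : ℝ) + 2) ^ β)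

/-- `σ_n(U(ℓ_∞(w)))`: the supremum of best `n`-term approximation errors over the unit
ball `U(ℓ_∞(w)) = {x ∈ ℓ₂ : sup_j |w_j x_j| ≤ 1}`. -/
noncomputable def sigmanUinf (w : ℕ → ℝ) (n : ℕ) : ℝ :=
  sSup {e : ℝ | ∃ x : ℕ → ℝ, Summable (fun j => (x j) ^ 2) ∧
    (∀ j, |w j * x j| ≤ 1) ∧ e = sigman n x}

open Finset

section BestNTerm

variable {n : ℕ} {x : ℕ → ℝ}

lemma sigman_le_l2norm : sigman n x ≤ l2norm x :=
  csInf_le ⟨0, by rintro _ ⟨S, -, -, rfl⟩; exact Real.sqrt_nonneg _⟩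
    ⟨0, by simp, by simp, by simp⟩

lemma summable_sub_sq_of_support_finite (hx : Summable fun j => x j ^ 2) {S : ℕ → ℝ}
    (hS : (Function.support S).Finite) : Summable fun j => (x j - S j) ^ 2 := by
  have hS2 : Summable fun j => S j ^ 2 :=
    summable_of_hasFiniteSupport (hS.subset fun j hj => by simpa using hj)
  refine Summable.of_nonneg_of_le (fun j => sq_nonneg _) (fun j => ?_) ((hx.add hS2).mul_left 2)
  nlinarith [sq_nonneg (x j + S j)]

/-- Keeping the first `n` coordinates leaves exactly the tail as error. -/
lemma sigman_le_sqrt_tsum_tail (hx : Summable fun j => x j ^ 2) :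
    sigman n x ≤ √(∑' j, x (j + n) ^ 2) := by
  set S : ℕ → ℝ := fun j => if j < n then x j else 0
  have hsupp : Function.support S ⊆ ↑(range n) := fun j hj => by
    by_contra h
    exact hj (if_neg (by simpa using h))
  have hfin : (Function.support S).Finite := (range n).finite_toSet.subset hsupp
  have hcard : (Function.support S).ncard ≤ n := by
    simpa using Set.ncard_le_ncard hsupp (range n).finite_toSet
  refine csInf_le ⟨0, by rintro _ ⟨S, -, -, rfl⟩; exact Real.sqrt_nonneg _⟩ ⟨S, hfin, hcard, ?_⟩
  have hhead : ∑ j ∈ range n, (x j - S j) ^ 2 = 0 :=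
    sum_eq_zero fun j hj => by simp [S, mem_range.mp hj]
  have htail : ∀ j, (x (j + n) - S (j + n)) ^ 2 = x (j + n) ^ 2 := fun j => by simp [S]
  rw [l2norm, ← (summable_sub_sq_of_support_finite hx hfin).sum_add_tsum_nat_add n, hhead,
    zero_add]
  simp only [htail]

/-- An `n`-term approximant vanishes on at least `k` indices of a set of `n + k` indices. -/
lemma sqrt_mul_le_sigman (hx : Summable fun j => x j ^ 2) {T : Finset ℕ} {k : ℕ}
    (hT : n + k ≤ #T) {a : ℝ} (ha : 0 ≤ a) (hxT : ∀ j ∈ T, a ≤ |x j|) :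
    √k * a ≤ sigman n x := by
  refine le_csInf ⟨l2norm x, 0, by simp, by simp, by simp⟩ ?_
  rintro _ ⟨S, hfin, hcard, rfl⟩
  set T₀ := T.filter fun j => S j = 0
  have hT₀ : k ≤ #T₀ := by
    have hsplit := card_filter_add_card_filter_not (s := T) fun j => S j = 0
    have hne : #(T.filter fun j => ¬S j = 0) ≤ n := by
      have hsub : (↑(T.filter fun j => ¬S j = 0) : Set ℕ) ⊆ Function.support S :=
        fun j hj => (mem_filter.mp hj).2
      rw [← Set.ncard_coe_finset]
      exact (Set.ncard_le_ncard hsub hfin).trans hcard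
    simp only [T₀]
    omega
  have hlow : (k : ℝ) * a ^ 2 ≤ ∑ j ∈ T₀, (x j - S j) ^ 2 := by
    have hterm : ∀ j ∈ T₀, a ^ 2 ≤ (x j - S j) ^ 2 := fun j hj => by
      obtain ⟨hjT, hS⟩ := mem_filter.mp hj
      rw [hS, sub_zero, ← sq_abs (x j)]
      exact pow_le_pow_left₀ ha (hxT j hjT) 2
    calc (k : ℝ) * a ^ 2 ≤ #T₀ * a ^ 2 := by gcongr
      _ ≤ _ := by simpa using card_nsmul_le_sum T₀ _ _ hterm
  calc √k * a = √(k * a ^ 2) := by rw [Real.sqrt_mul (Nat.cast_nonneg _), Real.sqrt_sq ha]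
    _ ≤ l2norm fun j => x j - S j := Real.sqrt_le_sqrt <| hlow.trans <|
      (summable_sub_sq_of_support_finite hx hfin).sum_le_tsum _ fun j _ => sq_nonneg _

end BestNTerm

section WeightedUnitBall

variable {w : ℕ → ℝ} {n : ℕ}

lemma sq_le_inv_sq_of_abs_mul_le_one {u y : ℝ} (hu : 0 < u) (h : |u * y| ≤ 1) :
    y ^ 2 ≤ u⁻¹ ^ 2 := by
  rw [abs_mul, abs_of_pos hu, ← le_div_iff₀' hu, one_div] at h
  rw [← sq_abs]
  exact pow_le_pow_left₀ (abs_nonneg _) h 2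

lemma sigman_le_sigmanUinf (hw : ∀ j, 0 < w j) (hs : Summable fun j => (w j)⁻¹ ^ 2)
    {x : ℕ → ℝ} (hx : Summable fun j => x j ^ 2) (hxw : ∀ j, |w j * x j| ≤ 1) :
    sigman n x ≤ sigmanUinf w n := by
  refine le_csSup ⟨√(∑' j, (w j)⁻¹ ^ 2), ?_⟩ ⟨x, hx, hxw, rfl⟩
  rintro _ ⟨y, hy, hyw, rfl⟩
  exact sigman_le_l2norm.trans <| Real.sqrt_le_sqrt <|
    hy.tsum_le_tsum (fun j => sq_le_inv_sq_of_abs_mul_le_one (hw j) (hyw j)) hs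

lemma sigmanUinf_le_sqrt_tsum_tail (hw : ∀ j, 0 < w j) (hs : Summable fun j => (w j)⁻¹ ^ 2) :
    sigmanUinf w n ≤ √(∑' j, (w (j + n))⁻¹ ^ 2) := by
  refine Real.sSup_le ?_ (Real.sqrt_nonneg _)
  rintro _ ⟨x, hx, hxw, rfl⟩
  refine (sigman_le_sqrt_tsum_tail hx).trans <| Real.sqrt_le_sqrt <|
    ((summable_nat_add_iff n).mpr hx).tsum_le_tsum
      (fun j => sq_le_inv_sq_of_abs_mul_le_one (hw _) (hxw _)) ((summable_nat_add_iff n).mpr hs)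

/-- The extremal element `(w j)⁻¹` of the ball is large on the first `2n` indices. -/
lemma sqrt_div_le_sigmanUinf (hw : ∀ j, 0 < w j) (hs : Summable fun j => (w j)⁻¹ ^ 2)
    (hmono : Monotone w) : √n / w (2 * n - 1) ≤ sigmanUinf w n := by
  have hx : ∀ j, |w j * (w j)⁻¹| ≤ 1 := fun j => by simp [(hw j).ne']
  refine le_trans ?_ (sigman_le_sigmanUinf hw hs hs hx)
  rw [div_eq_mul_inv]
  refine sqrt_mul_le_sigman (T := range (2 * n)) hs (by simp; omega)
    (inv_nonneg.mpr (hw _).le) fun j hj => ?_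
  rw [abs_of_pos (inv_pos.mpr (hw j))]
  exact inv_anti₀ (hw j) (hmono (by simp at hj; omega))

end WeightedUnitBall

noncomputable def powLog (a b t : ℝ) : ℝ := t ^ a * Real.log (t + 1) ^ b

section PowLog

variable {a b s t : ℝ}

lemma powLog_pos (ht : 0 < t) : 0 < powLog a b t :=
  mul_pos (Real.rpow_pos_of_pos ht _) (Real.rpow_pos_of_pos (Real.log_pos (by linarith)) _)

lemma powLog_add (c : ℝ) (ht : 0 < t) : powLog (c + a) b t = t ^ c * powLog a b t := by
  rw [powLog, powLog, Real.rpow_add ht, mul_assoc]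

lemma sqrt_div_powLog (ht : 0 < t) :
    √t / powLog a b t = t ^ (-(a - 1 / 2)) * Real.log (t + 1) ^ (-b) := by
  have hL : 0 < Real.log (t + 1) := Real.log_pos (by linarith)
  rw [powLog, Real.sqrt_eq_rpow, show -(a - 1 / 2) = 1 / 2 - a by ring, Real.rpow_sub ht,
    Real.rpow_neg hL.le]
  field_simp

lemma log_add_one_le_mul_rpow_div {θ : ℝ} (hθ : 0 < θ) (hs : 1 ≤ s) (hst : s ≤ t) :
    Real.log (t + 1) ≤ (1 + (θ * Real.log 2)⁻¹) * (t / s) ^ θ * Real.log (s + 1) := by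
  have hs0 : 0 < s := by linarith
  have hts : 0 < t / s := div_pos (by linarith) hs0
  have hlog2 : 0 < Real.log 2 := Real.log_pos one_lt_two
  have hL2 : Real.log 2 ≤ Real.log (s + 1) := Real.log_le_log two_pos (by linarith)
  have hq : 1 ≤ (t / s) ^ θ := Real.one_le_rpow ((one_le_div hs0).mpr hst) hθ.le
  have hratio : Real.log (t + 1) - Real.log (s + 1) ≤ Real.log (t / s) := by
    rw [← Real.log_div (by linarith) (by linarith)]
    refine Real.log_le_log (div_pos (by linarith) (by linarith)) ?_
    rw [div_le_div_iff₀ (by linarith) hs0]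
    linarith
  have hsmall : (t / s) ^ θ / θ ≤ (t / s) ^ θ * Real.log (s + 1) * (θ * Real.log 2)⁻¹ :=
    calc (t / s) ^ θ / θ ≤ (t / s) ^ θ / θ * (Real.log (s + 1) / Real.log 2) :=
          le_mul_of_one_le_right (by positivity) ((one_le_div hlog2).mpr hL2)
      _ = _ := by ring
  calc Real.log (t + 1) ≤ Real.log (s + 1) + (t / s) ^ θ / θ := by
        linarith [Real.log_le_rpow_div hts.le hθ]
    _ ≤ (t / s) ^ θ * Real.log (s + 1) + (t / s) ^ θ * Real.log (s + 1) * (θ * Real.log 2)⁻¹ :=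
        add_le_add (le_mul_of_one_le_left (hL2.trans' hlog2.le) hq) hsmall
    _ = _ := by ring

lemma powLog_le_mul_powLog (ha : 0 < a) (b : ℝ) :
    ∃ C > 0, ∀ s t : ℝ, 1 ≤ s → s ≤ t → powLog a b s ≤ C * powLog a b t := by
  rcases le_or_gt 0 b with hb | hb
  · refine ⟨1, one_pos, fun s t hs hst => ?_⟩
    rw [one_mul, powLog, powLog]
    exact mul_le_mul (Real.rpow_le_rpow (by linarith) hst ha.le)
      (Real.rpow_le_rpow (Real.log_nonneg (by linarith))
        (Real.log_le_log (by linarith) (by linarith)) hb)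
      (Real.rpow_nonneg (Real.log_nonneg (by linarith)) _) (Real.rpow_nonneg (by linarith) _)
  set c := -b
  have hc0 : 0 < c := by linarith
  set θ := a / c
  set K := 1 + (θ * Real.log 2)⁻¹
  have hθ : 0 < θ := by positivity
  have hK : 0 < K := by positivity
  refine ⟨K ^ c, by positivity, fun s t hs hst => ?_⟩
  have hs0 : 0 < s := by linarith
  have hts : 0 < t / s := div_pos (by linarith) hs0
  have hLs : 0 < Real.log (s + 1) := Real.log_pos (by linarith)
  have hLt : 0 < Real.log (t + 1) := Real.log_pos (by linarith)
  have hpow : Real.log (t + 1) ^ c ≤ K ^ c * (t ^ a / s ^ a) * Real.log (s + 1) ^ c :=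
    calc Real.log (t + 1) ^ c ≤ (K * (t / s) ^ θ * Real.log (s + 1)) ^ c :=
          Real.rpow_le_rpow hLt.le (log_add_one_le_mul_rpow_div hθ hs hst) hc0.le
      _ = K ^ c * (t ^ a / s ^ a) * Real.log (s + 1) ^ c := by
          rw [Real.mul_rpow (by positivity) hLs.le, Real.mul_rpow hK.le (by positivity),
            ← Real.rpow_mul hts.le, div_mul_cancel₀ a hc0.ne',
            Real.div_rpow (by linarith) hs0.le]
  have hsa : 0 < s ^ a := Real.rpow_pos_of_pos hs0 a
  rw [powLog, powLog, show b = -c by ring, Real.rpow_neg hLs.le, Real.rpow_neg hLt.le,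
    ← div_eq_mul_inv, ← div_eq_mul_inv, ← mul_div_assoc, div_le_div_iff₀ (by positivity)
    (by positivity)]
  calc s ^ a * Real.log (t + 1) ^ c ≤ s ^ a * (K ^ c * (t ^ a / s ^ a) * Real.log (s + 1) ^ c) :=
        mul_le_mul_of_nonneg_left hpow hsa.le
    _ = K ^ c * t ^ a * Real.log (s + 1) ^ c := by field_simp

lemma rpow_le_max_one_two_rpow_mul {x y : ℝ} (hx : 0 < x) (hxy : x ≤ y) (hy : y ≤ 2 * x)
    (b : ℝ) : y ^ b ≤ max 1 (2 ^ b) * x ^ b := by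
  rcases le_or_gt 0 b with hb | hb
  · calc y ^ b ≤ (2 * x) ^ b := Real.rpow_le_rpow (by linarith) hy hb
      _ = 2 ^ b * x ^ b := Real.mul_rpow zero_le_two hx.le
      _ ≤ max 1 (2 ^ b) * x ^ b := by gcongr; exact le_max_right _ _
  · calc y ^ b ≤ x ^ b := Real.rpow_le_rpow_of_nonpos hx hxy hb.le
      _ ≤ max 1 (2 ^ b) * x ^ b :=
        le_mul_of_one_le_left (Real.rpow_nonneg hx.le _) (le_max_left _ _)

lemma powLog_two_mul_le (ht : 0 < t) :
    powLog a b (2 * t) ≤ 2 ^ a * max 1 (2 ^ b) * powLog a b t := by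
  have hL : 0 < Real.log (t + 1) := Real.log_pos (by linarith)
  have hlog : Real.log (2 * t + 1) ^ b ≤ max 1 (2 ^ b) * Real.log (t + 1) ^ b := by
    refine rpow_le_max_one_two_rpow_mul hL (Real.log_le_log (by linarith) (by linarith)) ?_ b
    have h2 := Real.log_pow (t + 1) 2
    push_cast at h2
    rw [← h2]
    exact Real.log_le_log (by linarith) (by nlinarith)
  rw [powLog, powLog, Real.mul_rpow zero_le_two ht.le]
  calc 2 ^ a * t ^ a * Real.log (2 * t + 1) ^ b
      ≤ 2 ^ a * t ^ a * (max 1 (2 ^ b) * Real.log (t + 1) ^ b) := by gcongr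
    _ = _ := by ring

lemma sum_range_rpow_neg_le {r x : ℝ} (hr : 1 < r) (hx : 0 < x) (m : ℕ) :
    ∑ i ∈ range m, (x + i + 1) ^ (-r) ≤ x ^ (1 - r) / (r - 1) := by
  have hanti : AntitoneOn (fun u : ℝ => u ^ (-r)) (Set.Icc x (x + m)) :=
    fun u hu v _ huv => Real.rpow_le_rpow_of_nonpos (hx.trans_le hu.1) huv (by linarith)
  have hint := hanti.sum_le_integral
  rw [integral_rpow (Or.inr ⟨by linarith, fun h0 => by
    simp only [Set.mem_uIcc] at h0; rcases h0 with h0 | h0 <;> linarith [h0.1]⟩)] at hint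
  have hxm : 0 ≤ (x + m) ^ (-r + 1) := Real.rpow_nonneg (by positivity) _
  calc ∑ i ∈ range m, (x + i + 1) ^ (-r) = ∑ i ∈ range m, (x + ↑(i + 1)) ^ (-r) := by
        push_cast; simp only [add_assoc]
    _ ≤ ((x + m) ^ (-r + 1) - x ^ (-r + 1)) / (-r + 1) := hint
    _ = (x ^ (1 - r) - (x + m) ^ (-r + 1)) / (r - 1) := by
        rw [show -r + 1 = 1 - r by ring, ← neg_sub r 1, div_neg, ← neg_div, neg_sub]
    _ ≤ x ^ (1 - r) / (r - 1) := by gcongr; linarith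

/-- Writing `t ^ a = t ^ γ * t ^ δ` with `2γ > 1`, the slowly varying part `powLog δ b` is
pulled out of the tail at its left end, leaving a convergent power tail. -/
lemma sum_range_inv_powLog_sq_le (ha : 1 / 2 < a) (b : ℝ) :
    ∃ C > 0, ∀ x ≥ 1, ∀ m : ℕ,
      ∑ i ∈ range m, (powLog a b (x + i + 1))⁻¹ ^ 2 ≤ C * x / powLog a b x ^ 2 := by
  set γ := (2 * a + 1) / 4
  set δ := a - γ
  have hγ : 1 < 2 * γ := by simp only [γ]; linarith
  have hsplit : a = γ + δ := by ring
  obtain ⟨K, hK, hquasi⟩ := powLog_le_mul_powLog (by simp only [δ, γ]; linarith : 0 < δ) b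
  refine ⟨K ^ 2 / (2 * γ - 1), by have := sub_pos.mpr hγ; positivity, fun x hx m => ?_⟩
  have hx0 : 0 < x := by linarith
  have hPx := powLog_pos (a := δ) (b := b) hx0
  have hterm : ∀ t, x ≤ t →
      (powLog a b t)⁻¹ ^ 2 ≤ K ^ 2 * (powLog δ b x)⁻¹ ^ 2 * t ^ (-(2 * γ)) := fun t hxt => by
    have ht0 : 0 < t := by linarith
    have hPt := powLog_pos (a := δ) (b := b) ht0
    have hinv : (powLog δ b t)⁻¹ ≤ K * (powLog δ b x)⁻¹ := by
      rw [inv_le_comm₀ hPt (by positivity), mul_inv, inv_inv]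
      exact (inv_mul_le_iff₀ hK).mpr (hquasi x t hx hxt)
    have hsplit_inv : (powLog a b t)⁻¹ ≤ K * (powLog δ b x)⁻¹ * (t ^ γ)⁻¹ := by
      rw [hsplit, powLog_add γ ht0, mul_inv, mul_comm]
      exact mul_le_mul_of_nonneg_right hinv (by positivity)
    have hsq : ((t ^ γ)⁻¹) ^ 2 = t ^ (-(2 * γ)) := by
      rw [← Real.rpow_neg ht0.le, ← Real.rpow_natCast, ← Real.rpow_mul ht0.le]
      ring_nf
    calc (powLog a b t)⁻¹ ^ 2 ≤ (K * (powLog δ b x)⁻¹ * (t ^ γ)⁻¹) ^ 2 :=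
          pow_le_pow_left₀ (inv_nonneg.mpr (powLog_pos ht0).le) hsplit_inv 2
      _ = _ := by rw [mul_pow, mul_pow, hsq]
  calc ∑ i ∈ range m, (powLog a b (x + i + 1))⁻¹ ^ 2
      ≤ ∑ i ∈ range m, K ^ 2 * (powLog δ b x)⁻¹ ^ 2 * (x + i + 1) ^ (-(2 * γ)) :=
        sum_le_sum fun i _ => hterm _ (by linarith [(Nat.cast_nonneg i : (0 : ℝ) ≤ i)])
    _ ≤ K ^ 2 * (powLog δ b x)⁻¹ ^ 2 * (x ^ (1 - 2 * γ) / (2 * γ - 1)) := by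
        rw [← mul_sum]
        gcongr
        exact sum_range_rpow_neg_le hγ hx0 m
    _ = K ^ 2 / (2 * γ - 1) * x / powLog a b x ^ 2 := by
        rw [hsplit, powLog_add γ hx0, Real.rpow_sub hx0, Real.rpow_one,
          show 2 * γ = γ * (2 : ℕ) by push_cast; ring, Real.rpow_mul hx0.le, Real.rpow_natCast]
        have := sub_pos.mpr hγ
        field_simp

end PowLog

section Walpha

variable (α β : ℝ)

lemma walpha_eq_sup' (j : ℕ) :
    walpha α β j = (range (j + 1)).sup' nonempty_range_add_one fun i => powLog α β (i + 1) := by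
  unfold walpha powLog
  congr 1
  funext i
  ring_nf

lemma powLog_le_walpha (j : ℕ) : powLog α β (j + 1) ≤ walpha α β j := by
  rw [walpha_eq_sup']
  exact le_sup' (fun i : ℕ => powLog α β (i + 1)) (self_mem_range_succ j)

lemma walpha_pos (j : ℕ) : 0 < walpha α β j :=
  (powLog_pos (by positivity)).trans_le (powLog_le_walpha α β j)

lemma walpha_mono : Monotone (walpha α β) := fun i j hij => by
  simp only [walpha_eq_sup']
  exact sup'_mono _ (range_subset_range.mpr (by omega)) _

end Walpha

lemma walpha_le_mul_powLog {α β C : ℝ}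
    (hC : ∀ s t : ℝ, 1 ≤ s → s ≤ t → powLog α β s ≤ C * powLog α β t) (j : ℕ) :
    walpha α β j ≤ C * powLog α β (j + 1) := by
  rw [walpha_eq_sup']
  refine sup'_le _ _ fun i hi => hC _ _ (by simp) ?_
  simpa using (mem_range_succ_iff.mp hi)

lemma sum_range_inv_walpha_sq_le {α : ℝ} (hα : 1 / 2 < α) (β : ℝ) :
    ∃ C > 0, ∀ n : ℕ, 1 ≤ n → ∀ m : ℕ,
      ∑ i ∈ range m, (walpha α β (i + n))⁻¹ ^ 2 ≤ C * n / powLog α β n ^ 2 := by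
  obtain ⟨C, hC, htail⟩ := sum_range_inv_powLog_sq_le hα β
  refine ⟨C, hC, fun n hn m => (sum_le_sum fun i _ => ?_).trans (htail n (by exact_mod_cast hn) m)⟩
  have h := powLog_le_walpha α β (i + n)
  push_cast at h
  rw [show (n : ℝ) + i + 1 = i + n + 1 by ring]
  exact pow_le_pow_left₀ (inv_nonneg.mpr (walpha_pos α β _).le)
    (inv_anti₀ (powLog_pos (by positivity)) h) 2

lemma summable_inv_walpha_sq {α : ℝ} (hα : 1 / 2 < α) (β : ℝ) :
    Summable fun j => (walpha α β j)⁻¹ ^ 2 := by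
  obtain ⟨C, -, htail⟩ := sum_range_inv_walpha_sq_le hα β
  exact (summable_nat_add_iff 1).mp <|
    summable_of_sum_range_le (fun _ => sq_nonneg _) (htail 1 le_rfl)

/-- Corollary 3.2, case `p = ∞`: for `α > 1/2`, `β ∈ ℝ` and weights
`w_j = max_{1 ≤ i ≤ j} i^α (log(i+1))^β`, one has
`σ_n(U(ℓ_∞(w))) ≍ n^{-(α - 1/2)} (log(n+1))^{-β}` for all sufficiently large `n`. -/
theorem sigmanUinf_alg_log_weights (α β : ℝ) (hα : 1 / 2 < α) :
    ∃ c C : ℝ, ∃ N : ℕ, 0 < c ∧ 0 < C ∧ ∀ n : ℕ, N ≤ n →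
      c * (n : ℝ) ^ (-(α - 1 / 2)) * Real.log ((n : ℝ) + 1) ^ (-β) ≤
          sigmanUinf (walpha α β) n ∧
        sigmanUinf (walpha α β) n ≤
          C * (n : ℝ) ^ (-(α - 1 / 2)) * Real.log ((n : ℝ) + 1) ^ (-β) := by
  obtain ⟨C₁, hC₁, hquasi⟩ := powLog_le_mul_powLog (by linarith : 0 < α) β
  obtain ⟨C₂, hC₂, htail⟩ := sum_range_inv_walpha_sq_le hα β
  set D := 2 ^ α * max 1 ((2 : ℝ) ^ β)
  have hD : 0 < D := by positivity
  have hw := walpha_pos α β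
  have hs := summable_inv_walpha_sq hα β
  refine ⟨(C₁ * D)⁻¹, √C₂, 1, by positivity, by positivity, fun n hn => ?_⟩
  have hn0 : (0 : ℝ) < n := by exact_mod_cast hn
  have hP := powLog_pos (a := α) (b := β) hn0
  rw [mul_assoc, mul_assoc, ← sqrt_div_powLog hn0]
  constructor
  · have hw_le : walpha α β (2 * n - 1) ≤ C₁ * D * powLog α β n := by
      have h := walpha_le_mul_powLog hquasi (2 * n - 1)
      rw [Nat.cast_sub (by omega), Nat.cast_mul, Nat.cast_ofNat, Nat.cast_one, sub_add_cancel] at h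
      rw [mul_assoc]
      exact h.trans (mul_le_mul_of_nonneg_left (powLog_two_mul_le hn0) hC₁.le)
    calc (C₁ * D)⁻¹ * (√n / powLog α β n) = √n / (C₁ * D * powLog α β n) := by
          field_simp
      _ ≤ √n / walpha α β (2 * n - 1) := div_le_div_of_nonneg_left (Real.sqrt_nonneg _) (hw _) hw_le
      _ ≤ _ := sqrt_div_le_sigmanUinf hw hs (walpha_mono α β)
  · calc sigmanUinf (walpha α β) n ≤ √(∑' j, (walpha α β (j + n))⁻¹ ^ 2) :=
          sigmanUinf_le_sqrt_tsum_tail hw hs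
      _ ≤ √(C₂ * n / powLog α β n ^ 2) :=
          Real.sqrt_le_sqrt (Real.tsum_le_of_sum_range_le (fun _ => sq_nonneg _) (htail n hn))
      _ = √C₂ * (√n / powLog α β n) := by
          rw [Real.sqrt_div' _ (sq_nonneg _), Real.sqrt_mul hC₂.le, Real.sqrt_sq hP.le,
            mul_div_assoc]
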